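/- arXiv:2003.10112 — 5 statements merged into one kernel-verified Lean document; each statement's English description precedes it below -/
import Mathlib

section
/- Let M ≥ 2, x₁ < ⋯ < x_M distinct reals, and E : ℝ × ℝ → ℝ≥0 with E(·, y) continuous, strictly convex, and coercive for each y. Then J(α, β) := Σₘ E(α + βxₘ, yₘ) is coercive on ℝ² (J(α,β) → ∞ as ‖(α,β)‖ → ∞), and hence the linear regression problem min_{(α,β)} J(α,β) admits a unique minimizer. -/
/-!
Writing `L(α, β) = (α + β xₘ)ₘ`, the objective is `J = F ∘ L` with `F(v) = Σₘ E(vₘ, yₘ)`.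
Since two of the `xₘ` differ, `L` is an injective linear map `ℝ² → ℝᴹ`, hence a closed
embedding, so `J` inherits coercivity and strict convexity from `F`. Both hold for `F`
coordinatewise: `F(v) ≥ E(vₘ, yₘ)` by nonnegativity, and `v ≠ w` differ in some coordinate.
A continuous coercive function attains its minimum, and a strictly convex one attains it
at most once.
-/

open Filter Set

theorem StrictConvexOn.comp_linearMap_of_injective {𝕜 E F β : Type*} [Semiring 𝕜]
    [PartialOrder 𝕜] [AddCommMonoid E] [AddCommMonoid F] [Module 𝕜 E] [Module 𝕜 F]
    [AddCommMonoid β] [PartialOrder β] [SMul 𝕜 β] {f : F → β} {s : Set F}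
    (hf : StrictConvexOn 𝕜 s f) (g : E →ₗ[𝕜] F) (hg : Function.Injective g) :
    StrictConvexOn 𝕜 (g ⁻¹' s) (f ∘ g) :=
  ⟨hf.1.linear_preimage _, fun x hx y hy hxy a b ha hb hab =>
    calc
      f (g (a • x + b • y)) = f (a • g x + b • g y) := by rw [g.map_add, g.map_smul, g.map_smul]
      _ < a • f (g x) + b • f (g y) := hf.2 hx hy (hg.ne hxy) ha hb hab⟩

theorem strictConvexOn_univ_sum_apply {𝕜 E β ι : Type*} [Field 𝕜] [LinearOrder 𝕜]
    [AddCommGroup E] [Module 𝕜 E] [AddCommGroup β] [PartialOrder β]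
    [IsOrderedCancelAddMonoid β] [Module 𝕜 β] [Fintype ι] {f : ι → E → β}
    (hf : ∀ i, StrictConvexOn 𝕜 univ (f i)) :
    StrictConvexOn 𝕜 univ (fun v : ι → E => ∑ i, f i (v i)) := by
  refine ⟨convex_univ, fun v _ w _ hvw a b ha hb hab => ?_⟩
  obtain ⟨i, hi⟩ := Function.ne_iff.mp hvw
  simp only [Pi.add_apply, Pi.smul_apply, Finset.smul_sum, ← Finset.sum_add_distrib]
  exact Finset.sum_lt_sum (fun j _ => (hf j).convexOn.2 trivial trivial ha.le hb.le hab)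
    ⟨i, Finset.mem_univ i, (hf i).2 trivial trivial hi ha hb hab⟩

theorem tendsto_sum_apply_cocompact_atTop {ι X : Type*} [Fintype ι] [TopologicalSpace X]
    {f : ι → X → ℝ} (hf0 : ∀ i z, 0 ≤ f i z) (hf : ∀ i, Tendsto (f i) (cocompact X) atTop) :
    Tendsto (fun v : ι → X => ∑ i, f i (v i)) (cocompact (ι → X)) atTop := by
  rw [← coprodᵢ_cocompact, Filter.coprodᵢ, tendsto_iSup]
  intro i
  refine tendsto_atTop_mono (fun v => ?_) ((hf i).comp tendsto_comap)
  exact Finset.single_le_sum (fun j _ => hf0 j (v j)) (Finset.mem_univ i)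

def affineEval {ι : Type*} (x : ι → ℝ) : ℝ × ℝ →ₗ[ℝ] ι → ℝ where
  toFun p m := p.1 + p.2 * x m
  map_add' p q := by ext m; simp only [Prod.fst_add, Prod.snd_add, Pi.add_apply]; ring
  map_smul' c p := by
    ext m; simp only [Prod.smul_fst, Prod.smul_snd, smul_eq_mul, Pi.smul_apply,
      RingHom.id_apply]; ring

theorem affineEval_injective {ι : Type*} {x : ι → ℝ} {i j : ι} (hij : x i ≠ x j) :
    Function.Injective (affineEval x) := by
  intro p q hpq
  have hi : p.1 + p.2 * x i = q.1 + q.2 * x i := congrFun hpq i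
  have hj : p.1 + p.2 * x j = q.1 + q.2 * x j := congrFun hpq j
  have hslope : p.2 = q.2 := by
    have : (p.2 - q.2) * (x i - x j) = 0 := by linarith
    simpa [sub_eq_zero, hij] using this
  exact Prod.ext (by rw [hslope] at hi; linarith) hslope

theorem tendsto_affineEval_cocompact {ι : Type*} [Finite ι] {x : ι → ℝ} {i j : ι}
    (hij : x i ≠ x j) :
    Tendsto (affineEval x) (cocompact (ℝ × ℝ)) (cocompact (ι → ℝ)) :=
  (LinearMap.isClosedEmbedding_of_injective
    (LinearMap.ker_eq_bot.mpr (affineEval_injective hij))).tendsto_cocompact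

/-- If `E(·, y)` is continuous, strictly convex and coercive for each `y`, and the
sampling points are distinct (`M ≥ 2`), then `J(α, β) = Σₘ E(α + β xₘ, yₘ)` is coercive
on `ℝ²` and the linear regression problem admits a unique minimizer. -/
theorem stmt15 (M : ℕ) (hM : 2 ≤ M) (x y : Fin M → ℝ) (hx : StrictMono x)
    (E : ℝ → ℝ → ℝ) (hE0 : ∀ s t : ℝ, 0 ≤ E s t)
    (hEcont : ∀ t : ℝ, Continuous (fun s : ℝ => E s t))
    (hEconv : ∀ t : ℝ, StrictConvexOn ℝ Set.univ (fun s : ℝ => E s t))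
    (hEcoer : ∀ t : ℝ, Filter.Tendsto (fun s : ℝ => E s t)
      (Filter.cocompact ℝ) Filter.atTop) :
    Filter.Tendsto (fun p : ℝ × ℝ => ∑ m, E (p.1 + p.2 * x m) (y m))
      (Filter.cocompact (ℝ × ℝ)) Filter.atTop ∧
    ∃! p : ℝ × ℝ, ∀ q : ℝ × ℝ,
      ∑ m, E (p.1 + p.2 * x m) (y m) ≤ ∑ m, E (q.1 + q.2 * x m) (y m) := by
  let F : (Fin M → ℝ) → ℝ := fun v => ∑ m, E (v m) (y m)
  have hx01 : x ⟨0, by omega⟩ ≠ x ⟨1, by omega⟩ := (hx (Fin.mk_lt_mk.mpr zero_lt_one)).ne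
  have hcoer : Tendsto (F ∘ affineEval x) (cocompact (ℝ × ℝ)) atTop :=
    (tendsto_sum_apply_cocompact_atTop (fun m z => hE0 z (y m)) (fun m => hEcoer (y m))).comp
      (tendsto_affineEval_cocompact hx01)
  have hcont : Continuous (F ∘ affineEval x) :=
    continuous_finsetSum _ fun m _ => (hEcont (y m)).comp (by fun_prop)
  have hconv : StrictConvexOn ℝ univ (F ∘ affineEval x) :=
    (strictConvexOn_univ_sum_apply fun m => hEconv (y m)).comp_linearMap_of_injective _
      (affineEval_injective hx01)
  obtain ⟨p, hp⟩ := hcont.exists_forall_le hcoer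
  exact ⟨hcoer, p, hp, fun q hq =>
    hconv.eq_of_isMinOn (fun r _ => hq r) (fun r _ => hp r) trivial trivial⟩
end

section
/- Let w be a finite signed measure on ℝ with Jordan decomposition w = w₊ − w₋, and let η : ℝ → ℝ be continuous with ‖η‖_∞ ≤ 1. Then ∫ η dw = |w|(ℝ) (the total variation of w) if and only if supp(w₊) ⊆ {x : η(x) = 1} and supp(w₋) ⊆ {x : η(x) = −1}. -/
open MeasureTheory

/-- Signed-support/saturation equivalence: for a finite signed measure with Jordan
decomposition `w = wp − wn` (mutually singular) and a continuous `η` with `‖η‖_∞ ≤ 1`,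
one has `∫ η dw = |w|(ℝ)` iff `wp` is supported in `{η = 1}` and `wn` in `{η = −1}`. -/
theorem stmt16 (wp wn : Measure ℝ) [IsFiniteMeasure wp] [IsFiniteMeasure wn]
    (hsing : wp ⟂ₘ wn) (η : ℝ → ℝ) (hη : Continuous η)
    (hη1 : ∀ x : ℝ, |η x| ≤ 1) :
    (∫ x, η x ∂wp) - (∫ x, η x ∂wn)
        = (wp Set.univ).toReal + (wn Set.univ).toReal ↔
      wp {x : ℝ | η x ≠ 1} = 0 ∧ wn {x : ℝ | η x ≠ -1} = 0 := by
  have hint : ∀ (μ : Measure ℝ) [IsFiniteMeasure μ], Integrable η μ := by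
    intro μ _
    exact (integrable_const (1:ℝ)).mono' hη.aestronglyMeasurable
      (Filter.Eventually.of_forall fun x => by simpa [Real.norm_eq_abs] using hη1 x)
  have hip := hint wp
  have hin := hint wn
  have h1p : Integrable (fun x => 1 - η x) wp := (integrable_const 1).sub hip
  have h1n : Integrable (fun x => 1 + η x) wn := (integrable_const 1).add hin
  have hIp : ∫ x, (1 - η x) ∂wp = (wp Set.univ).toReal - ∫ x, η x ∂wp := by
    rw [integral_sub (integrable_const 1) hip, integral_const]; simp [Measure.real]
  have hIn : ∫ x, (1 + η x) ∂wn = (wn Set.univ).toReal + ∫ x, η x ∂wn := by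
    rw [integral_add (integrable_const 1) hin, integral_const]; simp [Measure.real]
  have hpnn : ∀ x, 0 ≤ 1 - η x := fun x => by nlinarith [abs_le.mp (hη1 x)]
  have hnnn : ∀ x, 0 ≤ 1 + η x := fun x => by nlinarith [abs_le.mp (hη1 x)]
  have hsetp : {x : ℝ | η x ≠ 1} = {x : ℝ | ¬ (1 - η x = 0)} := by
    ext x; simp only [Set.mem_setOf_eq, sub_eq_zero, not_iff_not]; exact ⟨fun h => h.symm, fun h => h.symm⟩
  have hsetn : {x : ℝ | η x ≠ -1} = {x : ℝ | ¬ (1 + η x = 0)} := by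
    ext x
    constructor
    · intro h h'; exact h (by linarith)
    · intro h h'; exact h (by rw [h']; ring)
  constructor
  · intro h
    have h1 : 0 ≤ ∫ x, (1 - η x) ∂wp := integral_nonneg hpnn
    have h2 : 0 ≤ ∫ x, (1 + η x) ∂wn := integral_nonneg hnnn
    have hp0 : ∫ x, (1 - η x) ∂wp = 0 := by rw [hIp] at *; linarith
    have hn0 : ∫ x, (1 + η x) ∂wn = 0 := by rw [hIn] at *; linarith
    have hp := (integral_eq_zero_iff_of_nonneg hpnn h1p).mp hp0
    have hn := (integral_eq_zero_iff_of_nonneg hnnn h1n).mp hn0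
    have hp' : ∀ᵐ x ∂wp, 1 - η x = 0 := hp
    have hn' : ∀ᵐ x ∂wn, 1 + η x = 0 := hn
    refine ⟨?_, ?_⟩
    · rw [hsetp]; exact ae_iff.mp hp'
    · rw [hsetn]; exact ae_iff.mp hn'
  · rintro ⟨hp, hn⟩
    have hp' : η =ᵐ[wp] fun _ => (1:ℝ) := by
      rw [Filter.EventuallyEq, ae_iff]
      simpa using hp
    have hn' : η =ᵐ[wn] fun _ => (-1:ℝ) := by
      rw [Filter.EventuallyEq, ae_iff]
      simpa using hn
    rw [integral_congr_ae hp', integral_congr_ae hn', integral_const, integral_const]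
    simp [smul_eq_mul, Measure.real]
end

section
/- Let η : ℝ → ℝ be continuous with ‖η‖_∞ ≤ 1, and let w be a finite signed measure on ℝ. If Ω ⊆ ℝ is closed, sup_{x∈Ω} |η(x)| < 1, and ∫ η dw = |w|(ℝ), then |w|(Ω) = 0. -/
open MeasureTheory

/-- If `η` is continuous with `‖η‖_∞ ≤ 1`, `Ω` is closed with `sup_Ω |η| < 1`, and the
finite signed measure `w = wp − wn` (Jordan decomposition, mutually singular) achieves
`∫ η dw = |w|(ℝ)`, then `|w|(Ω) = 0`. -/
theorem stmt17 (wp wn : Measure ℝ) [IsFiniteMeasure wp] [IsFiniteMeasure wn]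
    (hsing : wp ⟂ₘ wn) (η : ℝ → ℝ) (hη : Continuous η)
    (hη1 : ∀ x : ℝ, |η x| ≤ 1)
    (Ω : Set ℝ) (hΩ : IsClosed Ω)
    (hsup : ∃ c : ℝ, c < 1 ∧ ∀ x ∈ Ω, |η x| ≤ c)
    (hdual : (∫ x, η x ∂wp) - (∫ x, η x ∂wn)
      = (wp Set.univ).toReal + (wn Set.univ).toReal) :
    wp Ω = 0 ∧ wn Ω = 0 := by
  obtain ⟨c, hc1, hcΩ⟩ := hsup
  have hintp : Integrable η wp :=
    (integrable_const (1 : ℝ)).mono' hη.aestronglyMeasurable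
      (Filter.Eventually.of_forall fun x => by simpa using hη1 x)
  have hintn : Integrable η wn :=
    (integrable_const (1 : ℝ)).mono' hη.aestronglyMeasurable
      (Filter.Eventually.of_forall fun x => by simpa using hη1 x)
  have hle_p : (∫ x, η x ∂wp) ≤ (wp Set.univ).toReal := by
    have := integral_mono hintp (integrable_const (1 : ℝ))
      (fun x => (abs_le.mp (hη1 x)).2)
    simpa [integral_const, smul_eq_mul, measureReal_def] using this
  have hle_n : -(wn Set.univ).toReal ≤ (∫ x, η x ∂wn) := by
    have := integral_mono (integrable_const (-1 : ℝ)) hintn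
      (fun x => (abs_le.mp (hη1 x)).1)
    simpa [integral_const, smul_eq_mul, measureReal_def] using this
  have heqp : (∫ x, η x ∂wp) = (wp Set.univ).toReal := by linarith
  have heqn : (∫ x, η x ∂wn) = -(wn Set.univ).toReal := by linarith
  -- positive part
  have hzp : (∫ x, (1 - η x) ∂wp) = 0 := by
    rw [integral_sub (integrable_const 1) hintp, heqp]
    simp [integral_const, measureReal_def]
  have haep : (fun x => 1 - η x) =ᵐ[wp] 0 :=
    (integral_eq_zero_iff_of_nonneg (fun x => by
        have := (abs_le.mp (hη1 x)).2; simp; linarith)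
      ((integrable_const 1).sub hintp)).mp hzp
  have hwp : wp {x | η x ≠ 1} = 0 := by
    refine measure_mono_null (fun x hx => ?_) (ae_iff.mp haep)
    simp only [Set.mem_setOf_eq, Pi.zero_apply] at *
    intro h'; exact hx (by linarith)
  -- negative part
  have hzn : (∫ x, (1 + η x) ∂wn) = 0 := by
    rw [integral_add (integrable_const 1) hintn, heqn]
    simp [integral_const, measureReal_def]
  have haen : (fun x => 1 + η x) =ᵐ[wn] 0 :=
    (integral_eq_zero_iff_of_nonneg (fun x => by
        have := (abs_le.mp (hη1 x)).1; simp; linarith)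
      ((integrable_const 1).add hintn)).mp hzn
  have hwn : wn {x | η x ≠ -1} = 0 := by
    refine measure_mono_null (fun x hx => ?_) (ae_iff.mp haen)
    simp only [Set.mem_setOf_eq, Pi.zero_apply] at *
    intro h'; exact hx (by linarith)
  constructor
  · refine measure_mono_null (fun x hx => ?_) hwp
    have := hcΩ x hx
    intro h
    rw [h] at this
    simp at this
    linarith
  · refine measure_mono_null (fun x hx => ?_) hwn
    have := hcΩ x hx
    intro h
    rw [h] at this
    simp at this
    linarith
end

section
/- Let f : ℝ → ℝ be a function whose distributional second derivative on an open interval (a, b) is a nonnegative measure (equivalently, D f is increasing on (a,b)). Then f is convex on (a, b). -/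
/-- If `f` has a derivative `f'` on `(a, b)` which is monotone increasing there
(i.e. the distributional second derivative is a nonnegative measure), then `f` is
convex on `(a, b)`. -/
theorem stmt18 (f f' : ℝ → ℝ) (a b : ℝ)
    (hderiv : ∀ x ∈ Set.Ioo a b, HasDerivAt f (f' x) x)
    (hmono : MonotoneOn f' (Set.Ioo a b)) :
    ConvexOn ℝ (Set.Ioo a b) f := by
  apply MonotoneOn.convexOn_of_deriv (convex_Ioo a b)
  · exact fun x hx => (hderiv x hx).continuousAt.continuousWithinAt
  · rw [interior_Ioo]
    exact fun x hx => (hderiv x hx).differentiableAt.differentiableWithinAt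
  · rw [interior_Ioo]
    intro x hx y hy hxy
    rw [(hderiv x hx).deriv, (hderiv y hy).deriv]
    exact hmono hx hy hxy
end

section
/- Let x₁ < x₂ < x₃ < x₄ and y ∈ ℝ⁴, and suppose the slope differences a₂ := (y₃−y₂)/(x₃−x₂) − (y₂−y₁)/(x₂−x₁) and a₃ := (y₄−y₃)/(x₄−x₃) − (y₃−y₂)/(x₃−x₂) satisfy a₂·a₃ > 0. Then the line through (x₁,y₁),(x₂,y₂) and the line through (x₃,y₃),(x₄,y₄) are not parallel, and their intersection point (τ̃, ỹ) satisfies x₂ < τ̃ < x₃. -/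
/-- Geometric core of the mountain lemma: if the slope differences `a₂, a₃` are
same-signed, the lines through `(x₁,y₁),(x₂,y₂)` and `(x₃,y₃),(x₄,y₄)` are not
parallel and intersect at a point `(τ̃, ỹ)` with `x₂ < τ̃ < x₃`. -/
theorem stmt19 (x₁ x₂ x₃ x₄ y₁ y₂ y₃ y₄ : ℝ)
    (h12 : x₁ < x₂) (h23 : x₂ < x₃) (h34 : x₃ < x₄)
    (ha : ((y₃ - y₂) / (x₃ - x₂) - (y₂ - y₁) / (x₂ - x₁))
        * ((y₄ - y₃) / (x₄ - x₃) - (y₃ - y₂) / (x₃ - x₂)) > 0) :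
    (y₂ - y₁) / (x₂ - x₁) ≠ (y₄ - y₃) / (x₄ - x₃) ∧
    ∃ τ yint : ℝ, x₂ < τ ∧ τ < x₃ ∧
      y₁ + (y₂ - y₁) / (x₂ - x₁) * (τ - x₁) = yint ∧
      y₃ + (y₄ - y₃) / (x₄ - x₃) * (τ - x₃) = yint := by
  have hd1 : (0:ℝ) < x₂ - x₁ := by linarith
  have hd2 : (0:ℝ) < x₃ - x₂ := by linarith
  have hd3 : (0:ℝ) < x₄ - x₃ := by linarith
  set s1 := (y₂ - y₁) / (x₂ - x₁) with hs1
  set s2 := (y₃ - y₂) / (x₃ - x₂) with hs2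
  set s3 := (y₄ - y₃) / (x₄ - x₃) with hs3
  have hy2 : y₂ - y₁ = s1 * (x₂ - x₁) := (div_mul_cancel₀ _ hd1.ne').symm
  have hy3 : y₃ - y₂ = s2 * (x₃ - x₂) := (div_mul_cancel₀ _ hd2.ne').symm
  set a₂ := s2 - s1 with ha2
  set a₃ := s3 - s2 with ha3
  have ha' : 0 < a₂ * a₃ := ha
  have hS : a₂ + a₃ ≠ 0 := by intro h; nlinarith [sq_nonneg (a₂ + a₃), sq_nonneg (a₂ - a₃)]
  have hne : s1 ≠ s3 := by intro h; apply hS; simp [ha2, ha3]; linarith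
  refine ⟨hne, x₂ + a₃ * (x₃ - x₂) / (a₂ + a₃),
      y₁ + s1 * (x₂ + a₃ * (x₃ - x₂) / (a₂ + a₃) - x₁), ?_, ?_, rfl, ?_⟩
  · have : 0 < a₃ * (x₃ - x₂) / (a₂ + a₃) := by
      rcases mul_pos_iff.mp ha' with ⟨h2, h3⟩ | ⟨h2, h3⟩
      · exact div_pos (by positivity) (by linarith)
      · exact div_pos_of_neg_of_neg (mul_neg_of_neg_of_pos h3 hd2) (by linarith)
    linarith
  · have : a₃ * (x₃ - x₂) / (a₂ + a₃) < x₃ - x₂ := by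
      rcases mul_pos_iff.mp ha' with ⟨h2, h3⟩ | ⟨h2, h3⟩
      · rw [div_lt_iff₀ (by linarith)]; nlinarith
      · rw [div_lt_iff_of_neg (by linarith)]; nlinarith
    linarith
  · field_simp
    linear_combination (a₂ + a₃) * hy2 + (a₂ + a₃) * hy3
end
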